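/- For every positive integer L, every natural number d, and every integer b with d+1 ≤ b ≤ d+2^L, there exists a vector χ indexed by pairs (j,l) with 0 ≤ l ≤ L and 1 ≤ j ≤ ⌈2^(L-l)⌉, taking values in {-1,0,1}, with at most ⌈(L+1)/2⌉ nonzero entries, such that the indicator function of the interval [b, d+2^L] on the integers equals the sum over (j,l) of χ_{j,l} times the indicator function of the interval [d+(j-1)·2^l+1, d+j·2^l]. -/
import Mathlib


/-- indicator of the integer interval [a,b] as a real-valued function on ℤ -/
def intervalInd (a b : ℤ) (x : ℤ) : ℝ := if a ≤ x ∧ x ≤ b then 1 else 0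

/-- index set of the dyadic family `Z_{L,d}` : pairs (j,l) with l ∈ [0,L], j ∈ [⌈2^(L-l)⌉] -/
def dyadicIdx (L : ℕ) : Finset (ℕ × ℕ) :=
  (Finset.Icc 1 (2 ^ L) ×ˢ Finset.Icc 0 L).filter (fun p => p.1 ≤ 2 ^ (L - p.2))

def F (d : ℤ) (p : ℕ × ℕ) (x : ℤ) : ℝ :=
  intervalInd (d + ((p.1 : ℤ) - 1) * 2 ^ p.2 + 1) (d + (p.1 : ℤ) * 2 ^ p.2) x

def RepS (L : ℕ) (d : ℤ) (g : ℤ → ℝ) (n : ℕ) (P : ℕ × ℕ → Prop) : Prop :=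
  ∃ χ : ℕ × ℕ → ℤ, (∀ p, χ p = -1 ∨ χ p = 0 ∨ χ p = 1) ∧
    ((dyadicIdx L).filter (fun p => χ p ≠ 0)).card ≤ n ∧
    (∀ p, χ p ≠ 0 → P p) ∧
    ∀ x : ℤ, g x = ∑ p ∈ dyadicIdx L, (χ p : ℝ) * F d p x

lemma mem_dyadicIdx {L : ℕ} {p : ℕ × ℕ} :
    p ∈ dyadicIdx L ↔ (1 ≤ p.1 ∧ p.1 ≤ 2 ^ L) ∧ p.2 ≤ L ∧ p.1 ≤ 2 ^ (L - p.2) := by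
  simp [dyadicIdx, Finset.mem_filter, Finset.mem_product, and_assoc]

lemma ind_split (a b c : ℤ) (h1 : a ≤ b + 1) (h2 : b ≤ c) (x : ℤ) :
    intervalInd a c x = intervalInd a b x + intervalInd (b + 1) c x := by
  unfold intervalInd
  split_ifs <;> (try norm_num) <;> omega

lemma ind_empty {a b : ℤ} (h : b < a) (x : ℤ) : intervalInd a b x = 0 := by
  rw [intervalInd, if_neg (by omega)]

lemma RepS.mono {L : ℕ} {d : ℤ} {g g' : ℤ → ℝ} {n n' : ℕ} {P P' : ℕ × ℕ → Prop}
    (h : RepS L d g n P) (hg : ∀ x, g' x = g x) (hn : n ≤ n') (hP : ∀ p, P p → P' p) :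
    RepS L d g' n' P' := by
  obtain ⟨χ, h1, h2, h3, h4⟩ := h
  exact ⟨χ, h1, h2.trans hn, fun p hp => hP p (h3 p hp), fun x => (hg x).trans (h4 x)⟩

lemma RepS.zero {L : ℕ} {d : ℤ} {P : ℕ × ℕ → Prop} : RepS L d (fun _ => 0) 0 P := by
  refine ⟨fun _ => 0, fun p => Or.inr (Or.inl rfl), ?_, by simp, by simp⟩
  simp

lemma RepS.neg {L : ℕ} {d : ℤ} {g : ℤ → ℝ} {n : ℕ} {P : ℕ × ℕ → Prop}
    (h : RepS L d g n P) : RepS L d (fun x => -(g x)) n P := by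
  obtain ⟨χ, h1, h2, h3, h4⟩ := h
  refine ⟨fun p => -(χ p), fun p => by rcases h1 p with h|h|h <;> simp [h], ?_, ?_, ?_⟩
  · simpa using h2
  · intro p hp; exact h3 p (by simpa using hp)
  · intro x
    try dsimp only
    rw [h4 x, ← Finset.sum_neg_distrib]
    apply Finset.sum_congr rfl
    intro p _
    push_cast
    ring

lemma RepS.single {L : ℕ} {d : ℤ} (p0 : ℕ × ℕ) (hp0 : p0 ∈ dyadicIdx L) (c : ℤ)
    (hc : c = -1 ∨ c = 1) :
    RepS L d (fun x => (c : ℝ) * F d p0 x) 1 (· = p0) := by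
  refine ⟨fun p => if p = p0 then c else 0, ?_, ?_, ?_, ?_⟩
  · intro p; dsimp only; split_ifs with h
    · rcases hc with h|h <;> simp [h]
    · simp
  · apply le_trans (Finset.card_le_card (show _ ⊆ ({p0} : Finset (ℕ × ℕ)) from ?_))
    · simp
    · intro q hq
      simp only [Finset.mem_filter] at hq
      by_contra hne
      simp only [Finset.mem_singleton] at hne
      exact hq.2 (if_neg hne)
  · intro p hp; by_contra hne; exact hp (if_neg hne)
  · intro x
    try dsimp only
    rw [Finset.sum_eq_single p0]
    · simp
    · intro q _ hq; simp [if_neg hq]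
    · intro h; exact absurd hp0 h

lemma RepS.add {L : ℕ} {d : ℤ} {g h : ℤ → ℝ} {n m : ℕ} {P Q : ℕ × ℕ → Prop}
    (hg : RepS L d g n P) (hh : RepS L d h m Q) (hdisj : ∀ p, P p → Q p → False) :
    RepS L d (fun x => g x + h x) (n + m) (fun p => P p ∨ Q p) := by
  obtain ⟨χ₁, a1, a2, a3, a4⟩ := hg
  obtain ⟨χ₂, b1, b2, b3, b4⟩ := hh
  have hone : ∀ p, χ₁ p = 0 ∨ χ₂ p = 0 := by
    intro p
    by_contra hcon
    push_neg at hcon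
    exact hdisj p (a3 p hcon.1) (b3 p hcon.2)
  refine ⟨fun p => χ₁ p + χ₂ p, ?_, ?_, ?_, ?_⟩
  · intro p
    try dsimp only
    rcases hone p with h0|h0
    · rw [h0]; simpa using b1 p
    · rw [h0]; simpa using a1 p
  · apply le_trans (Finset.card_le_card
      (show _ ⊆ (dyadicIdx L).filter (fun p => χ₁ p ≠ 0) ∪ (dyadicIdx L).filter (fun p => χ₂ p ≠ 0) from ?_))
    · exact le_trans (Finset.card_union_le _ _) (Nat.add_le_add a2 b2)
    · intro q hq
      simp only [Finset.mem_filter, Finset.mem_union] at hq ⊢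
      rcases hone q with h0|h0
      · exact Or.inr ⟨hq.1, by intro hz; apply hq.2; simp [h0, hz]⟩
      · exact Or.inl ⟨hq.1, by intro hz; apply hq.2; simp [h0, hz]⟩
  · intro p hp
    rcases hone p with h0|h0
    · exact Or.inr (b3 p (by intro hz; apply hp; simp [h0, hz]))
    · exact Or.inl (a3 p (by intro hz; apply hp; simp [h0, hz]))
  · intro x
    try dsimp only
    rw [a4 x, b4 x, ← Finset.sum_add_distrib]
    apply Finset.sum_congr rfl
    intro p _
    push_cast
    ring

lemma pow_split {L l : ℕ} (hl : l ≤ L) : (2:ℤ) ^ (L - l) * 2 ^ l = 2 ^ L := by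
  rw [← pow_add]
  congr 1
  omega

lemma RepS.embed {L : ℕ} {d : ℤ} {g : ℤ → ℝ} {n : ℕ} {P : ℕ × ℕ → Prop} (k : ℕ) (hk : k ≤ 3)
    (h : RepS L (d + (k : ℤ) * 2 ^ L) g n P) :
    RepS (L + 2) d g n
      (fun q => q.2 ≤ L ∧ k * 2 ^ (L - q.2) < q.1 ∧ q.1 ≤ (k + 1) * 2 ^ (L - q.2)) := by
  classical
  obtain ⟨χ, h1, h2, h3, h4⟩ := h
  set e : ℕ × ℕ → ℕ × ℕ := fun p => (p.1 + k * 2 ^ (L - p.2), p.2) with he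
  set χ' : ℕ × ℕ → ℤ := fun q =>
    if q.2 ≤ L ∧ k * 2 ^ (L - q.2) < q.1 ∧ q.1 ≤ (k + 1) * 2 ^ (L - q.2) then
      χ (q.1 - k * 2 ^ (L - q.2), q.2) else 0 with hχ'
  have hx : ∀ l : ℕ, (k + 1) * 2 ^ (L - l) = k * 2 ^ (L - l) + 2 ^ (L - l) := fun l => by ring
  have hx4 : ∀ l : ℕ, (k + 1) * 2 ^ (L - l) ≤ 4 * 2 ^ (L - l) :=
    fun l => Nat.mul_le_mul_right _ (by omega)
  have hle : ∀ l : ℕ, (2:ℕ) ^ (L - l) ≤ 2 ^ L := fun l => Nat.pow_le_pow_right (by norm_num) (by omega)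
  have hcond : ∀ p ∈ dyadicIdx L,
      (e p).2 ≤ L ∧ k * 2 ^ (L - (e p).2) < (e p).1 ∧ (e p).1 ≤ (k + 1) * 2 ^ (L - (e p).2) := by
    rintro ⟨j, l⟩ hp
    rw [mem_dyadicIdx] at hp
    simp only [he] at hp ⊢
    try dsimp only at hp ⊢
    refine ⟨hp.2.1, ?_, ?_⟩ <;> have := hx l <;> omega
  have hχ'e : ∀ p ∈ dyadicIdx L, χ' (e p) = χ p := by
    rintro ⟨j, l⟩ hp
    have h0 := hcond (j, l) hp
    simp only [hχ', he] at h0 ⊢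
    try dsimp only at h0 ⊢
    rw [if_pos h0]
    congr 1
    simp
  have hmem : ∀ p ∈ dyadicIdx L, e p ∈ dyadicIdx (L + 2) := by
    rintro ⟨j, l⟩ hp
    rw [mem_dyadicIdx] at hp ⊢
    simp only [he]
    try dsimp only at hp ⊢
    have hpow : (2:ℕ) ^ (L + 2 - l) = 4 * 2 ^ (L - l) := by
      rcases hp with ⟨_, hl, _⟩
      rw [show L + 2 - l = (L - l) + 2 by omega, pow_add]
      ring
    have h2L2 : (2:ℕ) ^ (L + 2 - l) ≤ 2 ^ (L + 2) := Nat.pow_le_pow_right (by norm_num) (by omega)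
    have := hx l
    have := hx4 l
    have := hle l
    refine ⟨⟨by omega, by omega⟩, by omega, by omega⟩
  have hinj : Set.InjOn e (dyadicIdx L) := by
    rintro ⟨j, l⟩ _ ⟨j', l'⟩ _ hpq
    simp only [he] at hpq
    try dsimp only at hpq
    rw [Prod.mk.injEq] at hpq
    obtain ⟨hj, hl⟩ := hpq
    subst hl
    rw [Prod.mk.injEq]
    exact ⟨by omega, rfl⟩
  have himg : ∀ q ∈ dyadicIdx (L + 2), χ' q ≠ 0 → q ∈ (dyadicIdx L).image e := by
    rintro ⟨j, l⟩ hq hqz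
    simp only [hχ'] at hqz
    try dsimp only at hqz
    by_cases hc : l ≤ L ∧ k * 2 ^ (L - l) < j ∧ j ≤ (k + 1) * 2 ^ (L - l)
    · rw [Finset.mem_image]
      refine ⟨(j - k * 2 ^ (L - l), l), ?_, ?_⟩
      · rw [mem_dyadicIdx]
        try dsimp only
        have := hx l
        have := hle l
        exact ⟨⟨by omega, by omega⟩, hc.1, by omega⟩
      · simp only [he]
        try dsimp only
        rw [Prod.mk.injEq]
        exact ⟨by omega, rfl⟩
    · exact absurd (if_neg hc) hqz
  have hF : ∀ p ∈ dyadicIdx L, ∀ x, F d (e p) x = F (d + (k : ℤ) * 2 ^ L) p x := by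
    rintro ⟨j, l⟩ hp x
    rw [mem_dyadicIdx] at hp
    try dsimp only at hp
    have hps : (2:ℤ) ^ (L - l) * 2 ^ l = 2 ^ L := pow_split hp.2.1
    simp only [F, he]
    try dsimp only
    congr 1 <;> push_cast <;> rw [← hps] <;> ring
  refine ⟨χ', ?_, ?_, ?_, ?_⟩
  · intro p
    simp only [hχ']
    split_ifs
    · exact h1 _
    · exact Or.inr (Or.inl rfl)
  · calc ((dyadicIdx (L+2)).filter (fun p => χ' p ≠ 0)).card
        ≤ (((dyadicIdx L).filter (fun p => χ p ≠ 0)).image e).card := by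
          apply Finset.card_le_card
          intro q hq
          rw [Finset.mem_filter] at hq
          obtain ⟨p, hp, hpe⟩ := Finset.mem_image.mp (himg q hq.1 hq.2)
          rw [Finset.mem_image]
          refine ⟨p, Finset.mem_filter.mpr ⟨hp, ?_⟩, hpe⟩
          rw [← hχ'e p hp, hpe]
          exact hq.2
      _ ≤ _ := le_trans (Finset.card_image_le) h2
  · intro p hp
    simp only [hχ'] at hp
    by_cases hc : p.2 ≤ L ∧ k * 2 ^ (L - p.2) < p.1 ∧ p.1 ≤ (k + 1) * 2 ^ (L - p.2)
    · exact hc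
    · exact absurd (if_neg hc) hp
  · intro x
    rw [h4 x]
    rw [← Finset.sum_subset (Finset.image_subset_iff.mpr hmem)
        (fun q hq hq2 => by
          have : χ' q = 0 := by
            by_contra hne
            exact hq2 (himg q hq hne)
          rw [this]; simp)]
    rw [Finset.sum_image (fun p hp q hq hpq => hinj hp hq hpq)]
    apply Finset.sum_congr rfl
    intro p hp
    rw [hχ'e p hp, hF p hp x]

lemma ind_congr {a b a' b' : ℤ} (ha : a = a') (hb : b = b') (x : ℤ) :
    intervalInd a b x = intervalInd a' b' x := by rw [ha, hb]

lemma RepS.single' {L : ℕ} {d : ℤ} (p0 : ℕ × ℕ) (hp0 : p0 ∈ dyadicIdx L) (a b : ℤ)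
    (ha : a = d + ((p0.1 : ℤ) - 1) * 2 ^ p0.2 + 1) (hb : b = d + (p0.1 : ℤ) * 2 ^ p0.2) :
    RepS L d (fun x => intervalInd a b x) 1 (· = p0) :=
  (RepS.single p0 hp0 1 (Or.inr rfl)).mono
    (fun x => by rw [ha, hb]; norm_num [F]) le_rfl (fun _ h => h)

lemma main : ∀ (L : ℕ) (d : ℤ) (r : ℕ), r ≤ 2 ^ L →
    RepS L d (fun x => intervalInd (d + 1) (d + (r : ℤ)) x) (L / 2 + 1) (fun _ => True) ∧
    RepS L d (fun x => intervalInd (d + (r : ℤ) + 1) (d + 2 ^ L) x) (L / 2 + 1) (fun _ => True)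
  | 0, d, r, hr => by
    have hm : ((1, 0) : ℕ × ℕ) ∈ dyadicIdx 0 := by simp [mem_dyadicIdx]
    interval_cases r
    · constructor
      · exact (RepS.zero (P := fun _ => True)).mono (fun x => ind_empty (by push_cast; omega) x) (by norm_num)
          (fun _ _ => trivial)
      · exact (RepS.single' (1, 0) hm (d + (0:ℕ) + 1) (d + 2 ^ 0)
          (by push_cast; ring) (by push_cast; ring)).mono (fun x => rfl) (by norm_num)
          (fun _ _ => trivial)
    · constructor
      · exact (RepS.single' (1, 0) hm (d + 1) (d + (1:ℕ))
          (by push_cast; ring) (by push_cast; ring)).mono (fun x => rfl) (by norm_num)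
          (fun _ _ => trivial)
      · exact (RepS.zero (P := fun _ => True)).mono (fun x => ind_empty (by push_cast; omega) x) (by norm_num)
          (fun _ _ => trivial)
  | 1, d, r, hr => by
    have hm10 : ((1, 0) : ℕ × ℕ) ∈ dyadicIdx 1 := by simp [mem_dyadicIdx]
    have hm20 : ((2, 0) : ℕ × ℕ) ∈ dyadicIdx 1 := by simp [mem_dyadicIdx]
    have hm11 : ((1, 1) : ℕ × ℕ) ∈ dyadicIdx 1 := by simp [mem_dyadicIdx]
    interval_cases r
    · constructor
      · exact (RepS.zero (P := fun _ => True)).mono (fun x => ind_empty (by push_cast; omega) x) (by norm_num)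
          (fun _ _ => trivial)
      · exact (RepS.single' (1, 1) hm11 (d + (0:ℕ) + 1) (d + 2 ^ 1)
          (by push_cast; ring) (by push_cast; ring)).mono (fun x => rfl) (by norm_num)
          (fun _ _ => trivial)
    · constructor
      · exact (RepS.single' (1, 0) hm10 (d + 1) (d + (1:ℕ))
          (by push_cast; ring) (by push_cast; ring)).mono (fun x => rfl) (by norm_num)
          (fun _ _ => trivial)
      · exact (RepS.single' (2, 0) hm20 (d + (1:ℕ) + 1) (d + 2 ^ 1)
          (by push_cast; ring) (by push_cast; ring)).mono (fun x => rfl) (by norm_num)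
          (fun _ _ => trivial)
    · constructor
      · exact (RepS.single' (1, 1) hm11 (d + 1) (d + (2:ℕ))
          (by push_cast; ring) (by push_cast; ring)).mono (fun x => rfl) (by norm_num)
          (fun _ _ => trivial)
      · exact (RepS.zero (P := fun _ => True)).mono (fun x => ind_empty (by push_cast; omega) x) (by norm_num)
          (fun _ _ => trivial)
  | (M + 2), d, r, hr => by
    have hD : 0 < 2 ^ M := pow_pos (by norm_num) M
    have hP4 : (2:ℕ) ^ (M + 2) = 4 * 2 ^ M := by ring
    have h4 : r ≤ 4 * 2 ^ M := by omega
    obtain ⟨q, r', hq3, hr', hrq⟩ : ∃ q r', q ≤ 3 ∧ r' ≤ 2 ^ M ∧ r = q * 2 ^ M + r' := by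
      rcases le_or_gt r (2 ^ M) with h | h
      · exact ⟨0, r, by omega, by omega, by omega⟩
      rcases le_or_gt r (2 * 2 ^ M) with h2 | h2
      · exact ⟨1, r - 2 ^ M, by omega, by omega, by omega⟩
      rcases le_or_gt r (3 * 2 ^ M) with h3 | h3
      · exact ⟨2, r - 2 * 2 ^ M, by omega, by omega, by omega⟩
      · exact ⟨3, r - 3 * 2 ^ M, by omega, by omega, by omega⟩
    subst hrq
    have hDz : (0:ℤ) < 2 ^ M := by positivity
    have hrz : (r' : ℤ) ≤ 2 ^ M := by exact_mod_cast hr'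
    have hPz : (2:ℤ) ^ (M + 2) = 4 * 2 ^ M := by ring
    have hn2 : M / 2 + 1 + 1 ≤ (M + 2) / 2 + 1 := by omega
    have hn2' : 1 + (M / 2 + 1) ≤ (M + 2) / 2 + 1 := by omega
    have hmFull : ((1, M + 2) : ℕ × ℕ) ∈ dyadicIdx (M + 2) := by
      rw [mem_dyadicIdx]
      refine ⟨⟨le_refl _, ?_⟩, le_refl _, ?_⟩
      · omega
      · simp [Nat.sub_self]
    have hmHalfR : ((2, M + 1) : ℕ × ℕ) ∈ dyadicIdx (M + 2) := by
      rw [mem_dyadicIdx]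
      refine ⟨⟨by omega, by omega⟩, by omega, ?_⟩
      rw [show M + 2 - (M + 1) = 1 by omega]
      norm_num
    have hmHalfL : ((1, M + 1) : ℕ × ℕ) ∈ dyadicIdx (M + 2) := by
      rw [mem_dyadicIdx]
      refine ⟨⟨by omega, by omega⟩, by omega, ?_⟩
      rw [show M + 2 - (M + 1) = 1 by omega]
      norm_num
    have hmQ4 : ((4, M) : ℕ × ℕ) ∈ dyadicIdx (M + 2) := by
      rw [mem_dyadicIdx]
      refine ⟨⟨by omega, by omega⟩, by omega, ?_⟩
      rw [show M + 2 - M = 2 by omega]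
      norm_num
    have hmQ1 : ((1, M) : ℕ × ℕ) ∈ dyadicIdx (M + 2) := by
      rw [mem_dyadicIdx]
      refine ⟨⟨by omega, by omega⟩, by omega, ?_⟩
      rw [show M + 2 - M = 2 by omega]
      norm_num
    interval_cases q
    · -- q = 0
      have IH := main M (d + ((0:ℕ):ℤ) * 2 ^ M) r' hr'
      constructor
      · -- prefix: directly embed quarter 1 prefix
        exact (IH.1.embed 0 (by norm_num)).mono
          (fun x => ind_congr (by push_cast; ring) (by push_cast; ring) x)
          (by omega) (fun _ _ => trivial)
      · -- suffix: full minus prefix of quarter 1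
        refine (((RepS.single' (1, M + 2) hmFull (d + 1) (d + 2 ^ (M + 2))
            (by push_cast; ring) (by push_cast; ring)).add
            (IH.1.embed 0 (by norm_num)).neg ?_).mono ?_ hn2' (fun _ _ => trivial))
        · rintro p rfl hP
          have h1 : M + 2 ≤ M := hP.1
          omega
        · intro x
          have hs := ind_split (d + 1) (d + (r' : ℤ)) (d + 2 ^ (M + 2))
            (by omega) (by linarith) x
          have e1 : intervalInd (d + ((0 * 2 ^ M + r' : ℕ) : ℤ) + 1) (d + 2 ^ (M + 2)) x
              = intervalInd (d + (r' : ℤ) + 1) (d + 2 ^ (M + 2)) x :=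
            ind_congr (by push_cast; ring) rfl x
          have e2 : intervalInd (d + ((0:ℕ):ℤ) * 2 ^ M + 1) (d + ((0:ℕ):ℤ) * 2 ^ M + (r' : ℤ)) x
              = intervalInd (d + 1) (d + (r' : ℤ)) x :=
            ind_congr (by push_cast; ring) (by push_cast; ring) x
          rw [e1, e2] at *
          linarith
    · -- q = 1
      have IH := main M (d + ((1:ℕ):ℤ) * 2 ^ M) r' hr'
      constructor
      · -- prefix: quarter1 full + prefix of quarter 2
        refine (((RepS.single' (1, M) hmQ1 (d + 1) (d + ((1:ℕ):ℤ) * 2 ^ M)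
            (by push_cast; ring) (by push_cast; ring)).add
            (IH.1.embed 1 (by norm_num)) ?_).mono ?_ hn2' (fun _ _ => trivial))
        · rintro p rfl hP
          have h1 : 1 * 2 ^ (M - M) < 1 := hP.2.1
          simp [Nat.sub_self] at h1
        · intro x
          have hs := ind_split (d + 1) (d + ((1:ℕ):ℤ) * 2 ^ M)
            (d + ((1 * 2 ^ M + r' : ℕ) : ℤ)) (by push_cast; linarith) (by push_cast; linarith) x
          have e2 : intervalInd (d + ((1:ℕ):ℤ) * 2 ^ M + 1) (d + ((1:ℕ):ℤ) * 2 ^ M + (r' : ℤ)) x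
              = intervalInd (d + ((1:ℕ):ℤ) * 2 ^ M + 1) (d + ((1 * 2 ^ M + r' : ℕ) : ℤ)) x :=
            ind_congr rfl (by push_cast; ring) x
          rw [e2] at *
          linarith
      · -- suffix: suffix of quarter 2 + right half
        refine (((IH.2.embed 1 (by norm_num)).add
            (RepS.single' (2, M + 1) hmHalfR (d + ((1:ℕ):ℤ) * 2 ^ M + 2 ^ M + 1) (d + 2 ^ (M + 2))
            (by push_cast; ring) (by push_cast; ring)) ?_).mono ?_ hn2 (fun _ _ => trivial))
        · rintro p hP rfl
          have h1 : M + 1 ≤ M := hP.1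
          omega
        · intro x
          have hs := ind_split (d + ((1 * 2 ^ M + r' : ℕ) : ℤ) + 1)
            (d + ((1:ℕ):ℤ) * 2 ^ M + 2 ^ M) (d + 2 ^ (M + 2))
            (by push_cast; linarith) (by push_cast; linarith) x
          have e1 : intervalInd (d + ((1:ℕ):ℤ) * 2 ^ M + (r' : ℤ) + 1)
              (d + ((1:ℕ):ℤ) * 2 ^ M + 2 ^ M) x
              = intervalInd (d + ((1 * 2 ^ M + r' : ℕ) : ℤ) + 1)
                (d + ((1:ℕ):ℤ) * 2 ^ M + 2 ^ M) x :=
            ind_congr (by push_cast; ring) rfl x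
          rw [e1]
          linarith
    · -- q = 2
      have IH := main M (d + ((2:ℕ):ℤ) * 2 ^ M) r' hr'
      constructor
      · -- prefix: left half + prefix of quarter 3
        refine (((RepS.single' (1, M + 1) hmHalfL (d + 1) (d + ((2:ℕ):ℤ) * 2 ^ M)
            (by push_cast; ring) (by push_cast; ring)).add
            (IH.1.embed 2 (by norm_num)) ?_).mono ?_ hn2' (fun _ _ => trivial))
        · rintro p rfl hP
          have h1 : M + 1 ≤ M := hP.1
          omega
        · intro x
          have hs := ind_split (d + 1) (d + ((2:ℕ):ℤ) * 2 ^ M)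
            (d + ((2 * 2 ^ M + r' : ℕ) : ℤ)) (by push_cast; linarith) (by push_cast; linarith) x
          have e2 : intervalInd (d + ((2:ℕ):ℤ) * 2 ^ M + 1) (d + ((2:ℕ):ℤ) * 2 ^ M + (r' : ℤ)) x
              = intervalInd (d + ((2:ℕ):ℤ) * 2 ^ M + 1) (d + ((2 * 2 ^ M + r' : ℕ) : ℤ)) x :=
            ind_congr rfl (by push_cast; ring) x
          rw [e2] at *
          linarith
      · -- suffix: suffix of quarter 3 + quarter 4
        refine (((IH.2.embed 2 (by norm_num)).add
            (RepS.single' (4, M) hmQ4 (d + ((2:ℕ):ℤ) * 2 ^ M + 2 ^ M + 1) (d + 2 ^ (M + 2))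
            (by push_cast; ring) (by push_cast; ring)) ?_).mono ?_ hn2 (fun _ _ => trivial))
        · rintro p hP rfl
          have h1 : (4:ℕ) ≤ (2 + 1) * 2 ^ (M - M) := hP.2.2
          simp [Nat.sub_self] at h1
        · intro x
          have hs := ind_split (d + ((2 * 2 ^ M + r' : ℕ) : ℤ) + 1)
            (d + ((2:ℕ):ℤ) * 2 ^ M + 2 ^ M) (d + 2 ^ (M + 2))
            (by push_cast; linarith) (by push_cast; linarith) x
          have e1 : intervalInd (d + ((2:ℕ):ℤ) * 2 ^ M + (r' : ℤ) + 1)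
              (d + ((2:ℕ):ℤ) * 2 ^ M + 2 ^ M) x
              = intervalInd (d + ((2 * 2 ^ M + r' : ℕ) : ℤ) + 1)
                (d + ((2:ℕ):ℤ) * 2 ^ M + 2 ^ M) x :=
            ind_congr (by push_cast; ring) rfl x
          rw [e1]
          linarith
    · -- q = 3
      have IH := main M (d + ((3:ℕ):ℤ) * 2 ^ M) r' hr'
      constructor
      · -- prefix: full minus suffix of quarter 4
        refine (((RepS.single' (1, M + 2) hmFull (d + 1) (d + 2 ^ (M + 2))
            (by push_cast; ring) (by push_cast; ring)).add
            (IH.2.embed 3 (by norm_num)).neg ?_).mono ?_ hn2' (fun _ _ => trivial))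
        · rintro p rfl hP
          have h1 : M + 2 ≤ M := hP.1
          omega
        · intro x
          have hs := ind_split (d + 1) (d + ((3 * 2 ^ M + r' : ℕ) : ℤ)) (d + 2 ^ (M + 2))
            (by push_cast; linarith) (by push_cast; linarith) x
          have e2 : intervalInd (d + ((3:ℕ):ℤ) * 2 ^ M + (r' : ℤ) + 1)
              (d + ((3:ℕ):ℤ) * 2 ^ M + 2 ^ M) x
              = intervalInd (d + ((3 * 2 ^ M + r' : ℕ) : ℤ) + 1) (d + 2 ^ (M + 2)) x :=
            ind_congr (by push_cast; ring) (by push_cast; ring) x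
          rw [e2] at *
          linarith
      · -- suffix: directly embed quarter 4 suffix
        exact (IH.2.embed 3 (by norm_num)).mono
          (fun x => ind_congr (by push_cast; ring) (by push_cast; ring) x)
          (by omega) (fun _ _ => trivial)


theorem stmt1 (L : ℕ) (hL : 1 ≤ L) (d : ℕ) (b : ℤ)
    (hb1 : (d : ℤ) + 1 ≤ b) (hb2 : b ≤ (d : ℤ) + 2 ^ L) :
    ∃ χ : ℕ × ℕ → ℤ,
      (∀ p, χ p = -1 ∨ χ p = 0 ∨ χ p = 1) ∧
      ((dyadicIdx L).filter (fun p => χ p ≠ 0)).card ≤ (L + 1 + 1) / 2 ∧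
      ∀ x : ℤ, intervalInd b ((d : ℤ) + 2 ^ L) x =
        ∑ p ∈ dyadicIdx L, (χ p : ℝ) *
          intervalInd ((d : ℤ) + (p.1 - 1) * 2 ^ p.2 + 1) ((d : ℤ) + p.1 * 2 ^ p.2) x := by
  have hbd : (0:ℤ) ≤ b - (d:ℤ) - 1 := by omega
  set s : ℕ := (b - (d:ℤ) - 1).toNat with hsdef
  have hs : (s:ℤ) = b - (d:ℤ) - 1 := Int.toNat_of_nonneg hbd
  have hsle : s ≤ 2 ^ L := by
    have h1 : (s:ℤ) ≤ ((2 ^ L : ℕ) : ℤ) := by push_cast; linarith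
    exact_mod_cast h1
  obtain ⟨χ, h1, h2, h3, h4⟩ := (main L (d:ℤ) s hsle).2
  refine ⟨χ, h1, by omega, ?_⟩
  intro x
  have hx := h4 x
  simp only [F] at hx
  have e : intervalInd ((d:ℤ) + (s:ℤ) + 1) ((d:ℤ) + 2 ^ L) x
      = intervalInd b ((d:ℤ) + 2 ^ L) x := ind_congr (by omega) rfl x
  rw [← e]
  exact hx
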